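/- arXiv:2410.21899 — 3 statements merged into one kernel-verified Lean document; each statement's English description precedes it below -/
import Mathlib

section
/- Let V : ℝ^d → ℝ be C^∞ and suppose there exist C > 0 and a compact set K ⊂ ℝ^d such that for all x ∉ K one has V(x) ≥ -C and |∇V(x)| ≥ 1/C. Then there exists b ∈ ℝ such that V(x) ≥ |x|/C + b for all x ∈ ℝ^d. -/
open Metric Filter Set Topology InnerProductSpace

/-- A smooth potential bounded below with gradient bounded away from
zero outside a compact set satisfies a global affine-in-`‖x‖` lower bound. -/
theorem witten_affine_lower_bound {d : ℕ}
    (V : EuclideanSpace ℝ (Fin d) → ℝ) (hV : ContDiff ℝ (⊤ : ℕ∞) V)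
    (C : ℝ) (hC : 0 < C) (K : Set (EuclideanSpace ℝ (Fin d))) (hK : IsCompact K)
    (hVlb : ∀ x ∉ K, -C ≤ V x)
    (hgrad : ∀ x ∉ K, 1 / C ≤ ‖gradient V x‖) :
    ∃ b : ℝ, ∀ x : EuclideanSpace ℝ (Fin d), ‖x‖ / C + b ≤ V x := by
  -- global lower bound m₀ for V
  obtain ⟨M, hM⟩ : BddBelow (V '' K) := (hK.image hV.continuous).bddBelow
  set m₀ : ℝ := min M (-C) with hm₀def
  have hm : ∀ z, m₀ ≤ V z := by
    intro z
    by_cases hz : z ∈ K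
    · exact (min_le_left _ _).trans (hM ⟨z, hz, rfl⟩)
    · exact (min_le_right _ _).trans (hVlb z hz)
  -- key estimate via penalized minimization
  have key : ∀ (x : EuclideanSpace ℝ (Fin d)) (α lam : ℝ), 0 ≤ α → α < 1 / C →
      0 ≤ lam → (∀ z ∈ closedBall x lam, z ∉ K) → m₀ + α * lam ≤ V x := by
    intro x α lam hα hαC hlam hdisj
    by_contra hcon
    push_neg at hcon
    set g : EuclideanSpace ℝ (Fin d) → ℝ := fun z => V z + α * dist z x with hgdef
    have hgcont : Continuous g :=
      hV.continuous.add (continuous_const.mul (continuous_id.dist continuous_const))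
    obtain ⟨y, hy, hmin⟩ := (isCompact_closedBall x lam).exists_isMinOn
      (nonempty_closedBall.2 hlam) hgcont.continuousOn
    have hgyx : g y ≤ V x := by
      have := hmin (mem_closedBall_self hlam)
      simpa [hgdef] using this
    -- y is an interior point of the ball
    have hylt : dist y x < lam := by
      rcases lt_or_eq_of_le (mem_closedBall.1 hy) with h | h
      · exact h
      · exfalso
        have : m₀ + α * lam ≤ g y := by
          simp only [hgdef, h]
          have := hm y; linarith
        linarith
    have hyK : y ∉ K := hdisj y hy
    set G := gradient V y with hGdef
    have hGnorm : 1 / C ≤ ‖G‖ := hgrad y hyK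
    have hGpos : 0 < ‖G‖ := lt_of_lt_of_le (by positivity) hGnorm
    -- derivative of t ↦ V (y + t • (-G)) at 0 is -‖G‖²
    have hdiff : HasGradientAt V G y := (hV.differentiable (by simp) y).hasGradientAt
    have hFD : HasFDerivAt V (toDual ℝ _ G) y := hdiff.hasFDerivAt
    have hc : HasDerivAt (fun t : ℝ => y + t • (-G)) (-G) 0 := by
      have h1 : HasDerivAt (fun t : ℝ => t • (-G)) ((1 : ℝ) • (-G)) 0 :=
        (hasDerivAt_id (0 : ℝ)).smul_const (-G)
      simpa using h1.const_add y
    have hFD' : HasFDerivAt V (toDual ℝ _ G) (y + (0:ℝ) • (-G)) := by simpa using hFD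
    have hφ : HasDerivAt (fun t : ℝ => V (y + t • (-G))) (-(‖G‖ ^ 2)) 0 := by
      have h := hFD'.comp_hasDerivAt 0 hc
      have hval : toDual ℝ (EuclideanSpace ℝ (Fin d)) G (-G) = -(‖G‖ ^ 2) := by
        rw [toDual_apply_apply, inner_neg_right, real_inner_self_eq_norm_sq]
      simpa [hval, Function.comp_def] using h
    have hslope : Tendsto (fun t : ℝ => (V (y + t • (-G)) - V y) / t)
        (𝓝[>] (0:ℝ)) (𝓝 (-(‖G‖ ^ 2))) := by
      have h := hasDerivAt_iff_tendsto_slope_zero.1 hφ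
      have h2 := h.mono_left (nhdsWithin_mono _
        (fun t (ht : t ∈ Set.Ioi (0:ℝ)) => ne_of_gt ht))
      refine h2.congr fun t => ?_
      rw [zero_add, zero_smul, add_zero, smul_eq_mul, inv_mul_eq_div]
    have t₀pos : 0 < (lam - dist y x) / ‖G‖ := div_pos (by linarith) hGpos
    have hev : ∀ᶠ t in 𝓝[>] (0:ℝ),
        -(α * ‖G‖) ≤ (V (y + t • (-G)) - V y) / t := by
      filter_upwards [Ioo_mem_nhdsGT_of_mem (Set.left_mem_Ico.2 t₀pos)] with t ht
      have htpos : 0 < t := ht.1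
      have hzy : dist (y + t • (-G)) y = t * ‖G‖ := by
        simp [dist_eq_norm, norm_smul, abs_of_pos htpos]
      have hzball : y + t • (-G) ∈ closedBall x lam := by
        have h1 : dist (y + t • (-G)) x ≤ dist (y + t • (-G)) y + dist y x :=
          dist_triangle _ _ _
        have h2 : t * ‖G‖ ≤ lam - dist y x := by
          have := (lt_div_iff₀ hGpos).1 ht.2
          linarith
        simp only [mem_closedBall]
        linarith [hzy ▸ h1]
      have hgineq : g y ≤ g (y + t • (-G)) := hmin hzball
      have hdistz : dist (y + t • (-G)) x ≤ dist y x + t * ‖G‖ := by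
        have := dist_triangle (y + t • (-G)) y x
        linarith [hzy ▸ this]
      have hVineq : V y - α * (t * ‖G‖) ≤ V (y + t • (-G)) := by
        simp only [hgdef] at hgineq
        nlinarith [mul_le_mul_of_nonneg_left hdistz hα]
      rw [le_div_iff₀ htpos]
      nlinarith
    have hle : -(α * ‖G‖) ≤ -(‖G‖ ^ 2) := ge_of_tendsto hslope hev
    have : ‖G‖ ≤ α := by nlinarith
    have : (1:ℝ) / C < 1 / C := lt_of_le_of_lt (hGnorm.trans this) hαC
    exact lt_irrefl _ this
  -- assemble the global bound
  obtain ⟨R, hR⟩ := hK.isBounded.subset_ball 0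
  set R' : ℝ := max R 0 with hR'def
  refine ⟨m₀ - R' / C, fun x => ?_⟩
  by_cases hx : ‖x‖ ≤ R'
  · have h1 : ‖x‖ / C ≤ R' / C := by gcongr
    linarith [hm x]
  · push_neg at hx
    set lam : ℝ := ‖x‖ - R' with hlamdef
    have hlam : 0 ≤ lam := by simp [hlamdef]; linarith
    have hdisj : ∀ z ∈ closedBall x lam, z ∉ K := by
      intro z hz hzK
      have h1 : dist z 0 < R := hR hzK
      have h2 : dist x 0 ≤ dist x z + dist z 0 := dist_triangle _ _ _
      have h3 : dist z x ≤ lam := mem_closedBall.1 hz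
      simp only [dist_zero_right] at h1 h2
      rw [dist_comm] at h2
      have h4 : R ≤ R' := le_max_left _ _
      simp only [hlamdef] at h3
      linarith
    have hbound : ∀ α ∈ Ioo (0:ℝ) (1/C), m₀ + α * lam ≤ V x := fun α hα =>
      key x α lam hα.1.le hα.2 hlam hdisj
    have htend : Tendsto (fun α : ℝ => m₀ + α * lam) (𝓝[<] (1/C)) (𝓝 (m₀ + (1/C) * lam)) :=
      ((continuous_const.add (continuous_id.mul continuous_const)).tendsto _).mono_left
        nhdsWithin_le_nhds
    have hfin : m₀ + (1/C) * lam ≤ V x := by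
      refine le_of_tendsto htend ?_
      filter_upwards [Ioo_mem_nhdsLT_of_mem (Set.right_mem_Ioc.2 (by positivity))] with α hα
      exact hbound α ⟨hα.1, hα.2⟩
    have : (1/C) * lam = ‖x‖ / C - R' / C := by
      simp only [hlamdef]; field_simp
    linarith
end

section
/- There is no homogeneous polynomial ℓ(x,y) of degree 2 in two real variables satisfying the equation 2(x³ ∂_x ℓ + y³ ∂_y ℓ) + 6x² ℓ + 2^{5/4}·(-y)·y³ = 0, i.e. the equation 2(x³,y³)·∇ℓ + 6x²ℓ − 2^{5/4} y⁴ = 0 has no solution ℓ ∈ P²_hom(ℝ²). Equivalently: writing ℓ = a x² + b xy + c y², matching coefficients forces a = b = 0 and then (4c − 2^{5/4}) y⁴ + 6c x² y² = 0, which is unsolvable. -/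
/-!
Only the coefficient `c` of `y²` in `ℓ` matters. Multiplication by `x³` or `y³` cannot produce the
monomials `x²y²` and `y⁴`, so in the left-hand side the coefficient of `x²y²` is `6c`, coming from
`6x²ℓ` alone, and the coefficient of `y⁴` is `4c − 2^{5/4}`, coming from `2y³ ∂_y ℓ` and the source
term. Both must vanish, which forces `2^{5/4} = 0`.
-/

open MvPolynomial

namespace MvPolynomial

theorem coeff_X_pow_mul' {σ R : Type*} [CommSemiring R] (m : σ →₀ ℕ) (i : σ) (n : ℕ)
    (p : MvPolynomial σ R) :
    coeff m (X i ^ n * p) = if n ≤ m i then coeff (m - Finsupp.single i n) p else 0 := by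
  simp only [X_pow_eq_monomial, coeff_monomial_mul', one_mul, Finsupp.single_le_iff]

end MvPolynomial

section EikonalResidual

variable {R : Type*} [CommRing R]

noncomputable def eikonalResidual (k : R) (ℓ : MvPolynomial (Fin 2) R) : MvPolynomial (Fin 2) R :=
  C (2 : R) * (X 0 ^ 3 * pderiv 0 ℓ + X 1 ^ 3 * pderiv 1 ℓ) + C (6 : R) * (X 0 ^ 2 * ℓ)
    - C k * X 1 ^ 4

theorem coeff_eikonalResidual_X0_sq_X1_sq (k : R) (ℓ : MvPolynomial (Fin 2) R) :
    coeff (Finsupp.single 0 2 + Finsupp.single 1 2) (eikonalResidual k ℓ)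
      = 6 * coeff (Finsupp.single 1 2) ℓ := by
  simp [eikonalResidual, coeff_X_pow_mul', coeff_X_pow, Finsupp.ext_iff]

theorem coeff_eikonalResidual_X1_pow_four (k : R) (ℓ : MvPolynomial (Fin 2) R) :
    coeff (Finsupp.single 1 4) (eikonalResidual k ℓ) = 4 * coeff (Finsupp.single 1 2) ℓ - k := by
  simp [eikonalResidual, coeff_X_pow_mul', coeff_X_pow, coeff_pderiv, ← Finsupp.single_tsub,
    ← Finsupp.single_add]
  ring

end EikonalResidual

/-- there is no homogeneous polynomial `ℓ` of degree `2` in two real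
variables solving `2 (x³ ∂_x ℓ + y³ ∂_y ℓ) + 6 x² ℓ − 2^{5/4} y⁴ = 0`. -/
theorem eikonal_obstruction :
    ¬ ∃ ℓ : MvPolynomial (Fin 2) ℝ, ℓ.IsHomogeneous 2 ∧
      C (2 : ℝ) * (X 0 ^ 3 * pderiv 0 ℓ + X 1 ^ 3 * pderiv 1 ℓ)
        + C (6 : ℝ) * (X 0 ^ 2 * ℓ)
        - C ((2 : ℝ) ^ ((5 : ℝ) / 4)) * X 1 ^ 4 = 0 := by
  rintro ⟨ℓ, -, h⟩
  have hres : eikonalResidual ((2 : ℝ) ^ ((5 : ℝ) / 4)) ℓ = 0 := h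
  have hxy := coeff_eikonalResidual_X0_sq_X1_sq ((2 : ℝ) ^ ((5 : ℝ) / 4)) ℓ
  have hy := coeff_eikonalResidual_X1_pow_four ((2 : ℝ) ^ ((5 : ℝ) / 4)) ℓ
  rw [hres, coeff_zero] at hxy hy
  have hpos : (0 : ℝ) < (2 : ℝ) ^ ((5 : ℝ) / 4) := by positivity
  linarith
end

section
/- Let p(x) = Σ_{i=1}^d t_i x_i^{ν_i} with t_i ∈ ℝ∖{0}, ν_i ≥ 2 integers, and suppose at least one ν_i is odd (say after reordering ν_1 is odd). Then for every η > 0 the set {x ∈ B(0,η) : p(x) < 0} is nonempty and path-connected. -/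
set_option maxHeartbeats 1000000


open Metric


lemma seg_coord_abs_le_norm {d : ℕ} (x : EuclideanSpace ℝ (Fin d)) (i : Fin d) :
    |x i| ≤ ‖x‖ := by
  rw [EuclideanSpace.norm_eq, show |x i| = Real.sqrt (|x i| ^ 2) by
    rw [Real.sqrt_sq (abs_nonneg _)]]
  apply Real.sqrt_le_sqrt
  rw [sq_abs]
  calc x i ^ 2 = ∑ j ∈ ({i} : Finset (Fin d)), ‖x j‖ ^ 2 := by
        simp [Real.norm_eq_abs, sq_abs]
    _ ≤ _ := Finset.sum_le_sum_of_subset_of_nonneg (Finset.subset_univ _)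
        (by intros; positivity)

lemma seg_norm_le_of_abs_le {d : ℕ} (x y : EuclideanSpace ℝ (Fin d))
    (h : ∀ i, |x i| ≤ |y i|) : ‖x‖ ≤ ‖y‖ := by
  rw [EuclideanSpace.norm_eq, EuclideanSpace.norm_eq]
  apply Real.sqrt_le_sqrt
  apply Finset.sum_le_sum
  intro i _
  rw [Real.norm_eq_abs, Real.norm_eq_abs]
  exact pow_le_pow_left₀ (abs_nonneg _) (h i) 2

lemma joinedIn_of_path {E : Type*} [TopologicalSpace E] {U : Set E} (γ : ℝ → E)
    (hc : Continuous γ) {u v : E} (h0 : γ 0 = u) (h1 : γ 1 = v)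
    (hmem : ∀ l ∈ Set.Icc (0:ℝ) 1, γ l ∈ U) : JoinedIn U u v :=
  ⟨⟨⟨fun s => γ s, hc.comp continuous_subtype_val⟩, by simp [h0], by simp [h1]⟩,
    fun s => hmem s ⟨s.2.1, s.2.2⟩⟩


/-- for `p(x) = Σ t_i x_i^{ν_i}` with `t_i ≠ 0`, `ν_i ≥ 2`, and at
least one `ν_i` odd, the local strict sublevel set `{x ∈ B(0,η) : p(x) < 0}` is
nonempty and path-connected for every `η > 0`. -/
theorem odd_order_sublevel_connected {d : ℕ}
    (t : Fin d → ℝ) (ν : Fin d → ℕ)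
    (ht : ∀ i, t i ≠ 0) (hν : ∀ i, 2 ≤ ν i) (hodd : ∃ i, Odd (ν i))
    (η : ℝ) (hη : 0 < η) :
    ({x : EuclideanSpace ℝ (Fin d) | x ∈ Metric.ball (0 : EuclideanSpace ℝ (Fin d)) η ∧
        (∑ i, t i * (x i) ^ ν i) < 0}).Nonempty ∧
    IsPathConnected {x : EuclideanSpace ℝ (Fin d) |
        x ∈ Metric.ball (0 : EuclideanSpace ℝ (Fin d)) η ∧ (∑ i, t i * (x i) ^ ν i) < 0} := by
  classical
  obtain ⟨i₀, hop⟩ := hodd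
  set S := {x : EuclideanSpace ℝ (Fin d) | x ∈ Metric.ball (0 : EuclideanSpace ℝ (Fin d)) η ∧
      (∑ i, t i * (x i) ^ ν i) < 0} with hSdef
  have hmemS : ∀ x : EuclideanSpace ℝ (Fin d),
      x ∈ S ↔ ‖x‖ < η ∧ (∑ i, t i * (x i) ^ ν i) < 0 := by
    intro x
    rw [hSdef]
    simp [mem_ball_zero_iff]
  have hη8 : (0:ℝ) < η / 8 := by linarith
  set c : ℝ := if 0 < t i₀ then -1 else 1 with hcdef
  have hB : t i₀ * (c * (η / 8)) ^ ν i₀ < 0 := by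
    rcases (ht i₀).lt_or_gt with h | h
    · have hc1 : c = 1 := if_neg (by linarith)
      rw [hc1, one_mul]
      exact mul_neg_of_neg_of_pos h (pow_pos hη8 _)
    · have hc1 : c = -1 := if_pos h
      rw [hc1, neg_one_mul, hop.neg_pow, mul_neg, neg_neg_iff_pos]
      exact mul_pos h (pow_pos hη8 _)
  have habsc : |c| = 1 := by
    rcases le_or_gt (t i₀) 0 with h | h
    · rw [hcdef, if_neg (by linarith)]; norm_num
    · rw [hcdef, if_pos h]; norm_num
  set r : EuclideanSpace ℝ (Fin d) := EuclideanSpace.single i₀ (c * (η / 8)) with hrdef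
  have hr_app : ∀ j, r j = if j = i₀ then c * (η / 8) else 0 := by
    intro j
    rw [hrdef, EuclideanSpace.single_apply]
  have hsplit : ∀ u : EuclideanSpace ℝ (Fin d),
      (∑ i, t i * (u i) ^ ν i)
        = t i₀ * (u i₀) ^ ν i₀ + ∑ i ∈ Finset.univ.erase i₀, t i * (u i) ^ ν i := by
    intro u
    rw [← Finset.add_sum_erase _ _ (Finset.mem_univ i₀)]
  have hsum_r : (∑ i, t i * (r i) ^ ν i) = t i₀ * (c * (η / 8)) ^ ν i₀ := by
    rw [hsplit r, hr_app i₀, if_pos rfl]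
    have : ∀ i ∈ Finset.univ.erase i₀, t i * (r i) ^ ν i = 0 := by
      intro i hi
      rw [hr_app i, if_neg (Finset.mem_erase.1 hi).1,
        zero_pow (by have := hν i; omega), mul_zero]
    rw [Finset.sum_eq_zero this, add_zero]
  have hrS : r ∈ S := by
    refine (hmemS r).2 ⟨?_, by rw [hsum_r]; exact hB⟩
    rw [hrdef, EuclideanSpace.norm_single, Real.norm_eq_abs, abs_mul, habsc, one_mul,
      abs_of_pos hη8]
    linarith
  have key : ∀ x ∈ S, JoinedIn S x r := by
    intro x hx
    obtain ⟨hxn, hxs⟩ := (hmemS x).1 hx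
    -- Path 1 : shrink the coordinates with positive term to 0
    set xpos : EuclideanSpace ℝ (Fin d) :=
      WithLp.toLp 2 (fun i => if 0 < t i * (x i) ^ ν i then x i else 0) with hxposdef
    have hxpos_app : ∀ i, xpos i = if 0 < t i * (x i) ^ ν i then x i else 0 := fun i => rfl
    set y : EuclideanSpace ℝ (Fin d) := x - xpos with hydef
    have hy_app : ∀ i, y i = x i - xpos i := fun i => rfl
    have hγ1_app : ∀ (l : ℝ) (i : Fin d), (x - l • xpos) i = x i - l * xpos i := by
      intro l i
      rfl
    have J1 : JoinedIn S x y := by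
      apply joinedIn_of_path (fun l : ℝ => x - l • xpos)
        (by fun_prop) (by simp) (by simp only [one_smul, hydef])
      intro l hl
      obtain ⟨hl0, hl1⟩ := hl
      have hterm : ∀ i, t i * ((x - l • xpos) i) ^ ν i ≤ t i * (x i) ^ ν i := by
        intro i
        rw [hγ1_app l i, hxpos_app i]
        by_cases hp : 0 < t i * (x i) ^ ν i
        · rw [if_pos hp, show x i - l * x i = (1 - l) * x i by ring, mul_pow,
            mul_left_comm]
          calc (1 - l) ^ ν i * (t i * (x i) ^ ν i) ≤ 1 * (t i * (x i) ^ ν i) := by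
                apply mul_le_mul_of_nonneg_right _ hp.le
                exact pow_le_one₀ (by linarith) (by linarith)
            _ = t i * (x i) ^ ν i := one_mul _
        · rw [if_neg hp, mul_zero, sub_zero]
      refine (hmemS _).2 ⟨?_, ?_⟩
      · refine lt_of_le_of_lt (seg_norm_le_of_abs_le _ x ?_) hxn
        intro i
        rw [hγ1_app l i, hxpos_app i]
        by_cases hp : 0 < t i * (x i) ^ ν i
        · rw [if_pos hp, show x i - l * x i = (1 - l) * x i by ring, abs_mul,
            abs_of_nonneg (by linarith : (0:ℝ) ≤ 1 - l)]
          nlinarith [abs_nonneg (x i)]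
        · rw [if_neg hp, mul_zero, sub_zero]
      · exact lt_of_le_of_lt (Finset.sum_le_sum fun i _ => hterm i) hxs
    obtain ⟨hyn, hys⟩ := (hmemS y).1 J1.target_mem
    have hyterm : ∀ i, t i * (y i) ^ ν i ≤ 0 := by
      intro i
      rw [hy_app i, hxpos_app i]
      by_cases hp : 0 < t i * (x i) ^ ν i
      · rw [if_pos hp, sub_self, zero_pow (by have := hν i; omega), mul_zero]
      · rw [if_neg hp, sub_zero]
        exact le_of_not_gt hp
    have hyneg : ∃ i, t i * (y i) ^ ν i < 0 := by
      by_contra h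
      push_neg at h
      exact absurd (Finset.sum_nonneg fun i _ => h i) (not_le.2 hys)
    -- Path 2 : shrink everything by a factor 8
    set z : EuclideanSpace ℝ (Fin d) := (8:ℝ)⁻¹ • y with hzdef
    have hz_app : ∀ i, z i = (8:ℝ)⁻¹ * y i := fun i => rfl
    have hγ2_app : ∀ (s : ℝ) (i : Fin d), (s • y) i = s * y i := fun s i => rfl
    have hsy : ∀ s : ℝ, 0 < s → s ≤ 1 → s • y ∈ S := by
      intro s hs0 hs1
      refine (hmemS _).2 ⟨?_, ?_⟩
      · rw [norm_smul, Real.norm_eq_abs, abs_of_pos hs0]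
        nlinarith [norm_nonneg y]
      · obtain ⟨i₁, hi₁⟩ := hyneg
        have hle : ∀ i ∈ Finset.univ, t i * ((s • y) i) ^ ν i ≤ (0 : ℝ) := by
          intro i _
          rw [hγ2_app s i, mul_pow, mul_left_comm]
          exact mul_nonpos_of_nonneg_of_nonpos (pow_nonneg hs0.le _) (hyterm i)
        have hlt : t i₁ * ((s • y) i₁) ^ ν i₁ < 0 := by
          rw [hγ2_app s i₁, mul_pow, mul_left_comm]
          exact mul_neg_of_pos_of_neg (pow_pos hs0 _) hi₁
        calc (∑ i, t i * ((s • y) i) ^ ν i) < ∑ _i : Fin d, (0:ℝ) :=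
              Finset.sum_lt_sum hle ⟨i₁, Finset.mem_univ i₁, hlt⟩
          _ = 0 := by simp
    have J2 : JoinedIn S y z := by
      apply joinedIn_of_path (fun l : ℝ => (1 - (7/8) * l) • y)
        (by fun_prop) (by norm_num) (by rw [hzdef]; norm_num)
      intro l hl
      exact hsy _ (by linarith [hl.2]) (by linarith [hl.1])
    obtain ⟨hzn', hzs⟩ := (hmemS z).1 J2.target_mem
    have hzn : ‖z‖ < η / 8 := by
      rw [hzdef, norm_smul, Real.norm_eq_abs]
      rw [abs_of_pos (by norm_num : (0:ℝ) < (8:ℝ)⁻¹)]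
      linarith
    have hzterm : ∀ i, t i * (z i) ^ ν i ≤ 0 := by
      intro i
      rw [hz_app i, mul_pow, mul_left_comm]
      exact mul_nonpos_of_nonneg_of_nonpos (by positivity) (hyterm i)
    -- Path 3 : move the i₀ coordinate to c * η/8
    set δ : ℝ := c * (η / 8) - z i₀ with hδdef
    set w : EuclideanSpace ℝ (Fin d) := z + EuclideanSpace.single i₀ δ with hwdef
    have hγ3_app : ∀ (l : ℝ) (j : Fin d),
        (z + l • EuclideanSpace.single i₀ δ) j
          = z j + l * (if j = i₀ then δ else 0) := by
      intro l j
      rw [show (z + l • EuclideanSpace.single i₀ δ) j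
          = z j + l * (EuclideanSpace.single i₀ δ j) from rfl,
        EuclideanSpace.single_apply]
    have hzabs : |z i₀| < η / 8 := lt_of_le_of_lt (seg_coord_abs_le_norm z i₀) hzn
    have J3 : JoinedIn S z w := by
      apply joinedIn_of_path (fun l : ℝ => z + l • EuclideanSpace.single i₀ δ)
        (by fun_prop) (by simp) (by simp only [one_smul, hwdef])
      intro l hl
      obtain ⟨hl0, hl1⟩ := hl
      refine (hmemS _).2 ⟨?_, ?_⟩
      · have h4 : ‖l • EuclideanSpace.single i₀ δ‖ = |l| * |δ| := by
          rw [norm_smul, EuclideanSpace.norm_single, Real.norm_eq_abs,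
            Real.norm_eq_abs]
        have hcabs : |c * (η / 8)| = η / 8 := by
          rw [abs_mul, habsc, one_mul, abs_of_pos hη8]
        have habsδ : |δ| ≤ η / 4 := by
          rw [hδdef]
          calc |c * (η / 8) - z i₀| ≤ |c * (η / 8)| + |z i₀| := abs_sub _ _
            _ ≤ η / 4 := by rw [hcabs]; linarith
        have h2 : |l| ≤ 1 := by rw [abs_of_nonneg hl0]; exact hl1
        calc ‖z + l • EuclideanSpace.single i₀ δ‖
            ≤ ‖z‖ + ‖l • EuclideanSpace.single i₀ δ‖ := norm_add_le _ _
          _ < η := by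
              rw [h4]
              nlinarith [abs_nonneg δ, abs_nonneg l]
      · -- sum estimate
        set s : ℝ := z i₀ + l * δ with hsdef
        have hγi₀ : (z + l • EuclideanSpace.single i₀ δ) i₀ = s := by
          rw [hγ3_app, if_pos rfl]
        have hsum_split := hsplit (z + l • EuclideanSpace.single i₀ δ)
        have herase : ∀ j ∈ Finset.univ.erase i₀,
            t j * ((z + l • EuclideanSpace.single i₀ δ) j) ^ ν j
              = t j * (z j) ^ ν j := by
          intro j hj
          rw [hγ3_app, if_neg (Finset.mem_erase.1 hj).1, mul_zero, add_zero]
        rw [hsum_split, hγi₀, Finset.sum_congr rfl herase]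
        have hE : (∑ j ∈ Finset.univ.erase i₀, t j * (z j) ^ ν j) ≤ 0 :=
          Finset.sum_nonpos fun j _ => hzterm j
        have hzsum := hzs
        rw [hsplit z] at hzsum
        -- s lies between A := z i₀ and B := c * (η/8)
        have hmono : Monotone fun a : ℝ => a ^ ν i₀ := hop.strictMono_pow.monotone
        have hkey : t i₀ * s ^ ν i₀ ≤ t i₀ * (z i₀) ^ ν i₀ ∨
            t i₀ * s ^ ν i₀ ≤ t i₀ * (c * (η / 8)) ^ ν i₀ := by
          have hs_eq : s = z i₀ + l * (c * (η / 8) - z i₀) := by rw [hsdef, hδdef]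
          rcases le_total (z i₀) (c * (η / 8)) with hAB | hAB
          · have hsl : z i₀ ≤ s := by nlinarith
            have hsu : s ≤ c * (η / 8) := by nlinarith
            rcases (ht i₀).lt_or_gt with hneg | hpos
            · exact Or.inl (mul_le_mul_of_nonpos_left (hmono hsl) hneg.le)
            · exact Or.inr (mul_le_mul_of_nonneg_left (hmono hsu) hpos.le)
          · have hsl : c * (η / 8) ≤ s := by nlinarith
            have hsu : s ≤ z i₀ := by nlinarith
            rcases (ht i₀).lt_or_gt with hneg | hpos
            · exact Or.inr (mul_le_mul_of_nonpos_left (hmono hsl) hneg.le)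
            · exact Or.inl (mul_le_mul_of_nonneg_left (hmono hsu) hpos.le)
        rcases hkey with hk | hk
        · linarith
        · linarith
    obtain ⟨hwn, hws⟩ := (hmemS w).1 J3.target_mem
    have hw_app : ∀ j, w j = z j + (if j = i₀ then δ else 0) := by
      intro j
      rw [show w j = z j + (EuclideanSpace.single i₀ δ j) from rfl,
        EuclideanSpace.single_apply]
    have hwi₀ : w i₀ = c * (η / 8) := by
      rw [hw_app, if_pos rfl, hδdef]; ring
    -- Path 4 : shrink the remaining coordinates to 0
    set wrest : EuclideanSpace ℝ (Fin d) :=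
      WithLp.toLp 2 (fun j => if j = i₀ then 0 else w j) with hwrestdef
    have hwrest_app : ∀ j, wrest j = if j = i₀ then 0 else w j := fun j => rfl
    have hγ4_app : ∀ (l : ℝ) (j : Fin d), (w - l • wrest) j = w j - l * wrest j := by
      intro l j
      rfl
    have J4 : JoinedIn S w r := by
      apply joinedIn_of_path (fun l : ℝ => w - l • wrest)
        (by fun_prop) (by simp) ?_ ?_
      · show w - (1:ℝ) • wrest = r
        rw [one_smul]
        refine PiLp.ext fun j => ?_
        rw [show (w - wrest) j = w j - wrest j from rfl, hwrest_app j, hr_app j]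
        by_cases hj : j = i₀
        · rw [if_pos hj, if_pos hj, sub_zero, hj, hwi₀]
        · rw [if_neg hj, if_neg hj, sub_self]
      · intro l hl
        obtain ⟨hl0, hl1⟩ := hl
        show w - l • wrest ∈ S
        refine (hmemS _).2 ⟨?_, ?_⟩
        · refine lt_of_le_of_lt (seg_norm_le_of_abs_le _ w ?_) hwn
          intro j
          rw [hγ4_app l j, hwrest_app j]
          by_cases hj : j = i₀
          · rw [if_pos hj, mul_zero, sub_zero]
          · rw [if_neg hj, show w j - l * w j = (1 - l) * w j by ring, abs_mul,
              abs_of_nonneg (by linarith : (0:ℝ) ≤ 1 - l)]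
            nlinarith [abs_nonneg (w j)]
        · rw [hsplit]
          have hi₀term : (w - l • wrest) i₀ = c * (η / 8) := by
            rw [hγ4_app, hwrest_app, if_pos rfl, mul_zero, sub_zero, hwi₀]
          rw [hi₀term]
          have hE : (∑ j ∈ Finset.univ.erase i₀,
              t j * ((w - l • wrest) j) ^ ν j) ≤ 0 := by
            apply Finset.sum_nonpos
            intro j hj
            have hjne := (Finset.mem_erase.1 hj).1
            rw [hγ4_app, hwrest_app, if_neg hjne,
              show w j - l * w j = (1 - l) * w j by ring, mul_pow, mul_left_comm]
            have hwterm : t j * (w j) ^ ν j ≤ 0 := by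
              rw [hw_app j, if_neg hjne, add_zero]
              exact hzterm j
            exact mul_nonpos_of_nonneg_of_nonpos (pow_nonneg (by linarith) _) hwterm
          linarith
    exact J1.trans (J2.trans (J3.trans J4))
  exact ⟨⟨r, hrS⟩, ⟨r, hrS, by intro y hy; exact (key y hy).symm⟩⟩
end
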